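/- Marked Grothendieck computation of marked colimits in Cat (1-categorical version): let C be a category with a marking W ⊆ C and F : C ⥤ Cat. For any category X, there is a natural bijection between (a) functors ∫F ⥤ X that send every cocartesian morphism lying over a marked morphism of C to an isomorphism, and (b) lax cocones (α_c, θ_f) under F with vertex X such that θ_f is a natural isomorphism whenever f ∈ W. -/

import Mathlib

open CategoryTheory

universe v u v₂ u₂

variable {C : Type u} [Category.{v} C]

/-- A lax cocone under `F : C ⥤ Cat` with vertex `X`: functors `α_c : F c ⥤ X` together
with natural transformations `θ_f : α_c ⟶ F f ⋙ α_c'` satisfying unitality and the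
cocycle condition. -/
structure LaxCocone (F : C ⥤ Cat.{v₂, u₂}) (X : Type u₂) [Category.{v₂} X] where
  fib : ∀ c : C, F.obj c ⥤ X
  hom : ∀ {c c' : C} (f : c ⟶ c'), fib c ⟶ (F.map f).toFunctor ⋙ fib c'
  hom_id : ∀ c : C, hom (𝟙 c) =
    eqToHom (show fib c = (F.map (𝟙 c)).toFunctor ⋙ fib c by rw [CategoryTheory.Functor.map_id]; rfl)
  hom_comp : ∀ (c₁ c₂ c₃ : C) (f : c₁ ⟶ c₂) (g : c₂ ⟶ c₃), hom (f ≫ g) =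
    hom f ≫ Functor.whiskerLeft (F.map f).toFunctor (hom g) ≫
      eqToHom (show (F.map f).toFunctor ⋙ ((F.map g).toFunctor ⋙ fib c₃) = (F.map (f ≫ g)).toFunctor ⋙ fib c₃ by
        rw [CategoryTheory.Functor.map_comp]; rfl)

/-- The functor `∫F ⥤ X` associated to a lax cocone under `F` with vertex `X`. -/
def LaxCocone.toFunctor {F : C ⥤ Cat.{v₂, u₂}} {X : Type u₂} [Category.{v₂} X]
    (L : LaxCocone F X) : Grothendieck F ⥤ X :=
  Grothendieck.functorFrom L.fib L.hom L.hom_id L.hom_comp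

/-!
A functor `G : ∫F ⥤ X` restricts along the fibre inclusions `ι c` and the transformations
`ιNatTrans f : ι c ⟶ F f ⋙ ι c'` to a lax cocone, whose `θ_f` has the components `G (f, 𝟙)`.
Every morphism `(f, φ)` of `∫F` factors as `(f, 𝟙) ≫ (𝟙, φ)`, so `G` is recovered from this
cocone, and a lax cocone is recovered from its functor because it is the restriction of that
functor. The morphisms `(f, 𝟙)` are the cocartesian lifts of `f`, so `θ_f` is invertible exactly
when `G` inverts the cocartesian lifts of `f`; conversely `G (f, φ) = θ_f ≫ α (φ)` is invertible
whenever `θ_f` and `φ` are.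
-/

namespace CategoryTheory.Grothendieck

variable {F : C ⥤ Cat.{v₂, u₂}}

lemma ιNatTrans_id (c : C) :
    ιNatTrans (F := F) (𝟙 c) = eqToHom (by rw [Functor.map_id]; rfl) := by
  ext d
  rw [eqToHom_app, eqToHom_eq]
  exact Grothendieck.ext _ _ rfl (Category.comp_id _)

lemma ιNatTrans_comp {c₁ c₂ c₃ : C} (f : c₁ ⟶ c₂) (g : c₂ ⟶ c₃) :
    ιNatTrans (F := F) (f ≫ g) = ιNatTrans f ≫ Functor.whiskerLeft (F.map f).toFunctor (ιNatTrans g) ≫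
      eqToHom (by rw [Functor.map_comp]; rfl) := by
  ext d
  rw [NatTrans.comp_app, NatTrans.comp_app, eqToHom_app, eqToHom_eq]
  fapply Grothendieck.ext
  · exact congrArg (f ≫ ·) (Category.comp_id g).symm
  · simp only [comp_fiber, ιNatTrans_app_fiber, Functor.whiskerLeft_app]
    -- the fibre categories reached through `Grothendieck.Hom` carry the instance of `F.obj c`
    -- only up to unfolding, which is why the rewrites below need `erw`
    erw [Functor.map_id (F.map _).toFunctor, Functor.map_id (F.map _).toFunctor, Category.comp_id,
      Category.id_comp, Category.id_comp, eqToHom_trans, eqToHom_trans]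
    exact rfl

lemma ιNatTrans_app_comp_ι_map {a b : Grothendieck F} (φ : a ⟶ b) :
    (ιNatTrans φ.base).app a.fiber ≫ (ι F b.base).map φ.fiber = φ := by
  fapply Grothendieck.ext
  · exact Category.comp_id _
  · simp only [comp_fiber, ιNatTrans_app_fiber]
    erw [Functor.map_id (F.map _).toFunctor, Category.id_comp]
    dsimp only [ι]
    erw [eqToHom_trans_assoc, eqToHom_trans_assoc, eqToHom_refl, Category.id_comp]

end CategoryTheory.Grothendieck

namespace LaxCocone

variable {F : C ⥤ Cat.{v₂, u₂}} {X : Type u₂} [Category.{v₂} X]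

def ofFunctor (G : Grothendieck F ⥤ X) : LaxCocone F X where
  fib c := Grothendieck.ι F c ⋙ G
  hom f := Functor.whiskerRight (Grothendieck.ιNatTrans f) G
  hom_id c := by
    rw [Grothendieck.ιNatTrans_id]
    ext
    simp [eqToHom_map]
  hom_comp c₁ c₂ c₃ f g := by
    rw [Grothendieck.ιNatTrans_comp]
    ext
    simp [eqToHom_map]

lemma toFunctor_map (L : LaxCocone F X) {a b : Grothendieck F} (φ : a ⟶ b) :
    L.toFunctor.map φ = (L.hom φ.base).app a.fiber ≫ (L.fib b.base).map φ.fiber := rfl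

lemma toFunctor_ofFunctor (G : Grothendieck F ⥤ X) : (ofFunctor G).toFunctor = G :=
  CategoryTheory.Functor.ext (fun _ => rfl) fun a b φ => by
    erw [eqToHom_refl, eqToHom_refl, Category.id_comp, Category.comp_id]
    exact (G.map_comp _ _).symm.trans (congrArg G.map (Grothendieck.ιNatTrans_app_comp_ι_map φ))

lemma ι_comp_toFunctor (L : LaxCocone F X) (c : C) : Grothendieck.ι F c ⋙ L.toFunctor = L.fib c :=
  CategoryTheory.Functor.ext_of_iso (Grothendieck.ιCompFunctorFrom _ _ _ _ c) (fun _ => rfl) (fun _ => rfl)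

lemma hom_app_eq_toFunctor_map (L : LaxCocone F X) {c c' : C} (f : c ⟶ c') (d : F.obj c) :
    (L.hom f).app d = L.toFunctor.map ((Grothendieck.ιNatTrans f).app d) := by
  rw [toFunctor_map]
  erw [(L.fib c').map_id, Category.comp_id]
  rfl

lemma toFunctor_injective : Function.Injective (toFunctor : LaxCocone F X → _) := by
  intro L₁ L₂ h
  have hfib : L₁.fib = L₂.fib := funext fun c => by rw [← ι_comp_toFunctor, h, ι_comp_toFunctor]
  have hhom {c c' : C} (f : c ⟶ c') (d : F.obj c) : (L₁.hom f).app d ≍ (L₂.hom f).app d := by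
    rw [hom_app_eq_toFunctor_map, hom_app_eq_toFunctor_map]
    exact Functor.hcongr_hom h _
  rcases L₁ with ⟨fib, hom₁⟩
  rcases L₂ with ⟨_, hom₂⟩
  obtain rfl := hfib
  obtain rfl : @hom₁ = @hom₂ := by
    funext c c' f
    ext d
    exact eq_of_heq (hhom f d)
  rfl

end LaxCocone

/-- Marked Grothendieck computation of marked colimits in `Cat`: for a marking `W` of
`C`, the correspondence between functors `∫F ⥤ X` and lax cocones under `F` restricts
to a bijection between functors inverting every cocartesian morphism lying over a
marked morphism and lax cocones whose structure transformation `θ_f` is invertible for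
every marked `f`. -/
theorem grothendieck_marked_functors_equiv_markedCocones
    (F : C ⥤ Cat.{v₂, u₂}) (X : Type u₂) [Category.{v₂} X]
    (W : MorphismProperty C) :
    (∀ L : LaxCocone F X,
      (∀ {c c' : C} (f : c ⟶ c'), W f → IsIso (L.hom f)) →
      ∀ {a b : Grothendieck F} (φ : a ⟶ b), IsIso φ.fiber → W φ.base →
        IsIso (L.toFunctor.map φ)) ∧
    (∀ G : Grothendieck F ⥤ X,
      (∀ {a b : Grothendieck F} (φ : a ⟶ b), IsIso φ.fiber → W φ.base →
        IsIso (G.map φ)) →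
      ∃! L : LaxCocone F X,
        (∀ {c c' : C} (f : c ⟶ c'), W f → IsIso (L.hom f)) ∧
        L.toFunctor = G) := by
  refine ⟨fun L hL a b φ _ hφ => ?_, fun G hG => ?_⟩
  · have := hL φ.base hφ
    exact IsIso.comp_isIso' (NatIso.isIso_app_of_isIso _ _) ((L.fib b.base).map_isIso φ.fiber)
  · refine ⟨LaxCocone.ofFunctor G, ⟨fun f hf => ?_, LaxCocone.toFunctor_ofFunctor G⟩,
      fun L hL => LaxCocone.toFunctor_injective (hL.2.trans (LaxCocone.toFunctor_ofFunctor G).symm)⟩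
    have (d : F.obj _) : IsIso (((LaxCocone.ofFunctor G).hom f).app d) := hG _ (IsIso.id _) hf
    exact NatIso.isIso_of_isIso_app _
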